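/- The most reliable consistent sets of premisses are exactly the limit sets of believed premisses: for a reliability theory ⟨Σ, ≺⟩, the collection R of all most reliable consistent sets of premisses equals the collection { Δ∞^{≺'} | ≺' a strict linear order on Σ extending ≺ }, where Δ∞^{≺'} is the unique subset of Σ satisfying Δ∞^{≺'} = Σ \ Out_{A∞^{≺'}}(Δ∞^{≺'}). -/

import Mathlib

/-- Propositional formulas over atoms `α`, built with `¬` and `→`. -/
inductive Fml (α : Type) : Type
  | atom : α → Fml α
  | neg  : Fml α → Fml α
  | imp  : Fml α → Fml α → Fml α

/-- Satisfaction of a formula by an interpretation (a set of atoms). -/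
def Fml.sat {α : Type} (M : Set α) : Fml α → Prop
  | .atom a => a ∈ M
  | .neg φ => ¬ Fml.sat M φ
  | .imp φ ψ => Fml.sat M φ → Fml.sat M ψ

/-- Semantic entailment `S ⊨ φ`. -/
def Entails {α : Type} (S : Set (Fml α)) (φ : Fml α) : Prop :=
  ∀ M : Set α, (∀ ψ ∈ S, Fml.sat M ψ) → Fml.sat M φ

/-- Satisfiability of a set of formulas. -/
def Satisfiable {α : Type} (S : Set (Fml α)) : Prop :=
  ∃ M : Set α, ∀ ψ ∈ S, Fml.sat M ψ

/-- Propositional tautology. -/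
def Tautology {α : Type} (φ : Fml α) : Prop :=
  ∀ M : Set α, Fml.sat M φ

/-- `prec` is a reliability relation on `Sg`: a strict partial order
(irreflexive, asymmetric, transitive) relating only members of `Sg`. -/
def IsReliability {β : Type} (Sg : Set β) (prec : β → β → Prop) : Prop :=
  (∀ a b, prec a b → a ∈ Sg ∧ b ∈ Sg) ∧
  (∀ a, ¬ prec a a) ∧
  (∀ a b, prec a b → ¬ prec b a) ∧
  (∀ a b c, prec a b → prec b c → prec a c)

/-- `lt` is a strict linear order on `Sg` extending `prec`. -/
def IsLinearExt {β : Type} (Sg : Set β) (prec lt : β → β → Prop) : Prop :=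
  (∀ a b, lt a b → a ∈ Sg ∧ b ∈ Sg) ∧
  (∀ a, ¬ lt a a) ∧
  (∀ a b c, lt a b → lt b c → lt a c) ∧
  (∀ a ∈ Sg, ∀ b ∈ Sg, a ≠ b → lt a b ∨ lt b a) ∧
  (∀ a b, prec a b → lt a b)

/-- Arguments: supporting arguments `P ⇒ φ` and undermining arguments `P ⇏ φ`. -/
inductive Arg (α : Type) : Type
  | sup : Set (Fml α) → Fml α → Arg α
  | und : Set (Fml α) → Fml α → Arg α

/-- The set `A∞` of derivable arguments, as an inductive predicate:
initial arguments, the axiom rule, modus ponens and the contradiction rule. -/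
inductive Derivable {α : Type} (Sg : Set (Fml α)) (lt : Fml α → Fml α → Prop) :
    Arg α → Prop
  | initial {φ} (h : φ ∈ Sg) : Derivable Sg lt (.sup {φ} φ)
  | ax {φ} (h : Tautology φ) : Derivable Sg lt (.sup ∅ φ)
  | mp {P Q φ ψ} (h1 : Derivable Sg lt (.sup P φ))
      (h2 : Derivable Sg lt (.sup Q (.imp φ ψ))) :
      Derivable Sg lt (.sup (P ∪ Q) ψ)
  | contra {P Q φ η} (h1 : Derivable Sg lt (.sup P φ))
      (h2 : Derivable Sg lt (.sup Q (.neg φ)))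
      (hmem : η ∈ P ∪ Q) (hmin : ∀ x ∈ P ∪ Q, x ≠ η → lt η x) :
      Derivable Sg lt (.und ((P ∪ Q) \ {η}) η)

/-- The set `A∞` of derivable arguments. -/
def Ainf {α : Type} (Sg : Set (Fml α)) (lt : Fml α → Fml α → Prop) : Set (Arg α) :=
  {a | Derivable Sg lt a}

/-- `Out_A(S)`: premisses ruled out by undermining arguments in `A`
whose antecedents lie in `S`. -/
def OutA {α : Type} (A : Set (Arg α)) (S : Set (Fml α)) : Set (Fml α) :=
  {φ | ∃ P, Arg.und P φ ∈ A ∧ P ⊆ S}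

open scoped Classical in
/-- The most reliable consistent set of premisses built from an enumeration. -/
noncomputable def mrcBuild {α : Type} (l : List (Fml α)) : Set (Fml α) :=
  l.foldl (fun D σ => if Satisfiable (insert σ D) then insert σ D else D) ∅

/-- `l` enumerates `Sg` so that more reliable premisses come first:
whenever `l[j] ≺ l[k]` one has `k < j`. -/
def IsEnum {β : Type} (Sg : Set β) (prec : β → β → Prop) (l : List β) : Prop :=
  l.Nodup ∧ (∀ x, x ∈ l ↔ x ∈ Sg) ∧
  ∀ (j k : Fin l.length), prec (l.get j) (l.get k) → (k : ℕ) < (j : ℕ)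

/-- `D` is a most reliable consistent set of premisses of `⟨Sg, prec⟩`. -/
def MRC {α : Type} (Sg : Set (Fml α)) (prec : Fml α → Fml α → Prop)
    (D : Set (Fml α)) : Prop :=
  ∃ l : List (Fml α), IsEnum Sg prec l ∧ D = mrcBuild l

/-- `Prem(M)`: the premisses of `Sg` satisfied by interpretation `M`. -/
def PremOf {α : Type} (Sg : Set (Fml α)) (M : Set α) : Set (Fml α) :=
  {φ | φ ∈ Sg ∧ Fml.sat M φ}

/-- The preference relation `M ⊏ N` on interpretations. -/
def Pref {α : Type} (Sg : Set (Fml α)) (prec : Fml α → Fml α → Prop)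
    (M N : Set α) : Prop :=
  PremOf Sg M ≠ PremOf Sg N ∧
  ∀ φ ∈ PremOf Sg M \ PremOf Sg N, ∃ ψ ∈ PremOf Sg N \ PremOf Sg M, prec φ ψ

/-- `Th(⟨Sg, prec⟩)`: formulas entailed by every most reliable consistent set. -/
def ThR {α : Type} (Sg : Set (Fml α)) (prec : Fml α → Fml α → Prop) : Set (Fml α) :=
  {φ | ∀ D, MRC Sg prec D → Entails D φ}

/-- The reliability relation of the `a`-revised theory:
`prec` restricted to `Sg \ {a}`, with `a` strictly more reliable than
every other premiss. -/
def RevPrec {α : Type} (Sg : Set (Fml α)) (prec : Fml α → Fml α → Prop) (a : Fml α) :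
    Fml α → Fml α → Prop :=
  fun x y => (prec x y ∧ x ∈ Sg \ {a} ∧ y ∈ Sg \ {a}) ∨ (x ∈ Sg \ {a} ∧ y = a)

/-! A derivable undermining argument `P ⇏ φ` says exactly that `{φ} ∪ P` is unsatisfiable and
that `φ` is `≺'`-below every member of `P`; conversely every such finite `P ⊆ Σ` yields one,
since `P ⇒ ¬φ` is obtained from the tautology `p₁ → ⋯ → pₙ → ¬φ` by modus ponens. So `Out(D)`
consists of the premisses inconsistent with more reliable members of `D`. Along an enumeration
decreasing for `≺'`, the greedy construction rejects a premiss exactly when it is inconsistent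
with the more reliable premisses kept before it, so its result is a fixed point of
`D ↦ Σ \ Out(D)`. The fixed point is unique: membership of a premiss is decided by the more
reliable premisses, which allows a well-founded induction downwards along `≺'`. -/

theorem Satisfiable.mono {α : Type} {S T : Set (Fml α)} (hT : Satisfiable T) (hST : S ⊆ T) :
    Satisfiable S :=
  let ⟨M, hM⟩ := hT
  ⟨M, fun ψ hψ => hM ψ (hST hψ)⟩

namespace Arg

variable {α : Type}

def IsSound (lt : Fml α → Fml α → Prop) : Arg α → Prop
  | .sup P φ => Entails P φ
  | .und P φ => ¬ Satisfiable (insert φ P) ∧ ∀ x ∈ P, lt φ x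

end Arg

namespace Derivable

variable {α : Type} {Sg : Set (Fml α)} {lt : Fml α → Fml α → Prop}

theorem isSound {a : Arg α} (h : Derivable Sg lt a) : a.IsSound lt := by
  induction h with
  | initial => exact fun M hM => hM _ rfl
  | ax h => exact fun M _ => h M
  | mp _ _ ih₁ ih₂ =>
    exact fun M hM => ih₂ M (fun ψ hψ => hM ψ (.inr hψ)) (ih₁ M fun ψ hψ => hM ψ (.inl hψ))
  | contra _ _ hmem hmin ih₁ ih₂ =>
    refine ⟨fun ⟨M, hM⟩ => ?_, fun x hx => hmin x hx.1 hx.2⟩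
    rw [Set.insert_sdiff_singleton, Set.insert_eq_of_mem hmem] at hM
    exact ih₂ M (fun ψ hψ => hM ψ (.inr hψ)) (ih₁ M fun ψ hψ => hM ψ (.inl hψ))

theorem not_satisfiable {P : Set (Fml α)} {φ : Fml α} (h : Derivable Sg lt (.und P φ)) :
    ¬ Satisfiable (insert φ P) :=
  h.isSound.1

theorem lt_of_mem {P : Set (Fml α)} {φ x : Fml α} (h : Derivable Sg lt (.und P φ))
    (hx : x ∈ P) : lt φ x :=
  h.isSound.2 x hx

theorem sup_of_entails {T : Set (Fml α)} (hT : T.Finite) (hTSg : T ⊆ Sg) {χ : Fml α}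
    (h : Entails T χ) : Derivable Sg lt (.sup T χ) := by
  induction T, hT using Set.Finite.induction_on generalizing χ with
  | empty => exact .ax fun M => h M (by simp)
  | @insert a T _ _ ih =>
    have himp : Derivable Sg lt (.sup T (.imp a χ)) :=
      ih ((Set.subset_insert a T).trans hTSg) fun M hM ha =>
        h M fun ψ hψ => hψ.elim (· ▸ ha) (hM ψ)
    simpa [Set.singleton_union] using mp (.initial (hTSg (Set.mem_insert a T))) himp

theorem und_of_not_satisfiable {P : Set (Fml α)} {φ : Fml α} (hP : P.Finite)
    (hPSg : insert φ P ⊆ Sg) (hunsat : ¬ Satisfiable (insert φ P)) (hlt : ∀ x ∈ P, lt φ x) :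
    Derivable Sg lt (.und (P \ {φ}) φ) := by
  have hneg : Derivable Sg lt (.sup P (.neg φ)) :=
    sup_of_entails hP ((Set.subset_insert φ P).trans hPSg) fun M hM hφ =>
      hunsat ⟨M, fun ψ hψ => hψ.elim (· ▸ hφ) (hM ψ)⟩
  have := contra (.initial (hPSg (Set.mem_insert φ P))) hneg (.inl rfl)
    fun x hx hne => hlt x (hx.resolve_left hne)
  rwa [Set.union_sdiff_left] at this

end Derivable

section Greedy

variable {α : Type}

open scoped Classical in
noncomputable def mrcStep (D : Set (Fml α)) (σ : Fml α) : Set (Fml α) :=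
  if Satisfiable (insert σ D) then insert σ D else D

theorem mrcBuild_eq_foldl (l : List (Fml α)) : mrcBuild l = l.foldl mrcStep ∅ := rfl

theorem subset_mrcStep (D : Set (Fml α)) (σ : Fml α) : D ⊆ mrcStep D σ := by
  unfold mrcStep
  split_ifs
  exacts [Set.subset_insert σ D, subset_rfl]

theorem mrcStep_subset_insert (D : Set (Fml α)) (σ : Fml α) : mrcStep D σ ⊆ insert σ D := by
  unfold mrcStep
  split_ifs
  exacts [subset_rfl, Set.subset_insert σ D]

theorem satisfiable_mrcStep {D : Set (Fml α)} (hD : Satisfiable D) (σ : Fml α) :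
    Satisfiable (mrcStep D σ) := by
  unfold mrcStep
  split_ifs with h
  exacts [h, hD]

theorem subset_foldl_mrcStep (l : List (Fml α)) (D : Set (Fml α)) : D ⊆ l.foldl mrcStep D := by
  induction l generalizing D with
  | nil => exact subset_rfl
  | cons σ l ih => exact (subset_mrcStep D σ).trans (ih _)

theorem mem_of_mem_foldl_mrcStep {l : List (Fml α)} {D : Set (Fml α)} {x : Fml α}
    (hx : x ∈ l.foldl mrcStep D) : x ∈ D ∨ x ∈ l := by
  induction l generalizing D with
  | nil => exact .inl hx
  | cons σ l ih =>
    rcases ih hx with hx | hx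
    · rcases mrcStep_subset_insert D σ hx with rfl | hx
      exacts [.inr List.mem_cons_self, .inl hx]
    · exact .inr (List.mem_cons_of_mem σ hx)

theorem satisfiable_foldl_mrcStep (l : List (Fml α)) {D : Set (Fml α)} (hD : Satisfiable D) :
    Satisfiable (l.foldl mrcStep D) := by
  induction l generalizing D with
  | nil => exact hD
  | cons σ l ih => exact ih (satisfiable_mrcStep hD σ)

theorem mrcBuild_subset (l : List (Fml α)) : mrcBuild l ⊆ {x | x ∈ l} := fun x hx =>
  (mem_of_mem_foldl_mrcStep hx).resolve_left (Set.notMem_empty x)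

theorem satisfiable_mrcBuild (l : List (Fml α)) : Satisfiable (mrcBuild l) :=
  satisfiable_foldl_mrcStep l ⟨∅, by simp⟩

/-- The witness `P` is the set built from the premisses listed before `φ`. -/
theorem exists_not_satisfiable_of_notMem_mrcBuild {lt : Fml α → Fml α → Prop}
    {l : List (Fml α)} (hl : l.Pairwise fun a b => lt b a) {φ : Fml α} (hφ : φ ∈ l)
    (hφD : φ ∉ mrcBuild l) :
    ∃ P ⊆ mrcBuild l, (∀ x ∈ P, lt φ x) ∧ ¬ Satisfiable (insert φ P) := by
  obtain ⟨l₁, l₂, rfl⟩ := List.append_of_mem hφ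
  have hbuild : mrcBuild (l₁ ++ φ :: l₂) = l₂.foldl mrcStep (mrcStep (mrcBuild l₁) φ) := by
    simp only [mrcBuild_eq_foldl, List.foldl_append, List.foldl_cons]
  rw [hbuild] at hφD ⊢
  refine ⟨mrcBuild l₁, (subset_mrcStep _ φ).trans (subset_foldl_mrcStep _ _), ?_, ?_⟩
  · exact fun x hx => (List.pairwise_append.1 hl).2.2 x (mrcBuild_subset l₁ hx) φ (by simp)
  · intro hsat
    refine hφD (subset_foldl_mrcStep _ _ ?_)
    simp [mrcStep, hsat]

theorem mrcBuild_eq_sdiff_outA {Sg : Set (Fml α)} {lt : Fml α → Fml α → Prop}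
    {l : List (Fml α)} (hmem : ∀ x, x ∈ l ↔ x ∈ Sg) (hl : l.Pairwise fun a b => lt b a) :
    mrcBuild l = Sg \ OutA (Ainf Sg lt) (mrcBuild l) := by
  have hSg : mrcBuild l ⊆ Sg := fun x hx => (hmem x).1 (mrcBuild_subset l hx)
  ext φ
  constructor
  · intro hφ
    refine ⟨hSg hφ, fun ⟨P, hund, hPD⟩ => hund.not_satisfiable ?_⟩
    exact (satisfiable_mrcBuild l).mono (Set.insert_subset hφ hPD)
  · rintro ⟨hφSg, hout⟩
    by_contra hφD
    obtain ⟨P, hPD, hlt, hunsat⟩ :=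
      exists_not_satisfiable_of_notMem_mrcBuild hl ((hmem φ).2 hφSg) hφD
    have hP : P.Finite := (List.finite_toSet l).subset (hPD.trans (mrcBuild_subset l))
    exact hout ⟨P \ {φ},
      Derivable.und_of_not_satisfiable hP (Set.insert_subset hφSg (hPD.trans hSg)) hunsat hlt,
      Set.sdiff_subset.trans hPD⟩

end Greedy

section FixedPoint

variable {α : Type} {Sg : Set (Fml α)} {lt : Fml α → Fml α → Prop}

theorem mem_of_agree_above {D D' : Set (Fml α)} (hD : D ⊆ Sg \ OutA (Ainf Sg lt) D)
    (hD' : Sg \ OutA (Ainf Sg lt) D' ⊆ D') {φ : Fml α} (hφ : φ ∈ D)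
    (hagree : ∀ x ∈ D', lt φ x → x ∈ D) : φ ∈ D' := by
  refine hD' ⟨(hD hφ).1, fun ⟨P, hund, hPD'⟩ => (hD hφ).2 ⟨P, hund, fun x hx => ?_⟩⟩
  exact hagree x (hPD' hx) (hund.lt_of_mem hx)

theorem eq_of_eq_sdiff_outA (hfin : Sg.Finite) [IsStrictOrder (Fml α) lt]
    {D D' : Set (Fml α)} (hD : D = Sg \ OutA (Ainf Sg lt) D)
    (hD' : D' = Sg \ OutA (Ainf Sg lt) D') : D = D' := by
  have hagree (φ : Fml α) (hφ : φ ∈ Sg) : φ ∈ D ↔ φ ∈ D' := by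
    refine (hfin.wellFoundedOn (r := fun a b => lt b a)).induction hφ
      (P := fun ψ => ψ ∈ D ↔ ψ ∈ D') fun ψ _ ih => ⟨fun hψ => ?_, fun hψ => ?_⟩
    · exact mem_of_agree_above hD.subset hD'.symm.subset hψ fun x hx h =>
        (ih x (hD'.subset hx).1 h).2 hx
    · exact mem_of_agree_above hD'.subset hD.symm.subset hψ fun x hx h =>
        (ih x (hD.subset hx).1 h).1 hx
  ext φ
  by_cases hφ : φ ∈ Sg
  · exact hagree φ hφ
  · exact iff_of_false (fun h => hφ (hD.subset h).1) (fun h => hφ (hD'.subset h).1)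

end FixedPoint

section Enumerations

variable {β : Type}

theorem IsLinearExt.isStrictOrder {Sg : Set β} {prec lt : β → β → Prop}
    (h : IsLinearExt Sg prec lt) : IsStrictOrder β lt where
  irrefl := h.2.1
  trans := h.2.2.1

def enumOrder [DecidableEq β] (l : List β) (x y : β) : Prop :=
  x ∈ l ∧ y ∈ l ∧ l.idxOf y < l.idxOf x

theorem pairwise_enumOrder [DecidableEq β] {l : List β} (hl : l.Nodup) :
    l.Pairwise fun a b => enumOrder l b a := by
  refine List.pairwise_iff_getElem.2 fun i j hi hj hij => ⟨by simp, by simp, ?_⟩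
  rwa [hl.idxOf_getElem, hl.idxOf_getElem]

theorem IsEnum.isLinearExt_enumOrder [DecidableEq β] {Sg : Set β} {prec : β → β → Prop}
    {l : List β} (hl : IsEnum Sg prec l) (hprec : ∀ a b, prec a b → a ∈ Sg ∧ b ∈ Sg) :
    IsLinearExt Sg prec (enumOrder l) := by
  obtain ⟨-, hmem, henum⟩ := hl
  refine ⟨fun a b h => ⟨(hmem a).1 h.1, (hmem b).1 h.2.1⟩, fun a h => lt_irrefl _ h.2.2,
    fun a b c hab hbc => ⟨hab.1, hbc.2.1, hbc.2.2.trans hab.2.2⟩, ?_, ?_⟩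
  · intro a ha b hb hab
    have ha := (hmem a).2 ha
    have hb := (hmem b).2 hb
    rcases lt_or_gt_of_ne (mt (List.idxOf_inj ha).1 hab) with h | h
    exacts [.inr ⟨hb, ha, h⟩, .inl ⟨ha, hb, h⟩]
  · intro a b h
    have ha := (hmem a).2 (hprec a b h).1
    have hb := (hmem b).2 (hprec a b h).2
    refine ⟨ha, hb, henum ⟨_, List.idxOf_lt_length_of_mem ha⟩
      ⟨_, List.idxOf_lt_length_of_mem hb⟩ ?_⟩
    simpa [List.getElem_idxOf] using h

theorem isEnum_of_pairwise {Sg : Set β} {prec lt : β → β → Prop} [IsStrictOrder β lt]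
    {l : List β} (hnd : l.Nodup) (hmem : ∀ x, x ∈ l ↔ x ∈ Sg)
    (hl : l.Pairwise fun a b => lt b a) (hext : ∀ a b, prec a b → lt a b) :
    IsEnum Sg prec l := by
  refine ⟨hnd, hmem, fun j k h => ?_⟩
  rcases lt_trichotomy (j : ℕ) k with hjk | hjk | hjk
  · exact absurd (List.pairwise_iff_get.1 hl j k hjk) (asymm (hext _ _ h))
  · exact absurd (hext _ _ (Fin.ext hjk ▸ h)) (irrefl _)
  · exact hjk

theorem exists_nodup_pairwise {s : Set β} (hs : s.Finite) {r : β → β → Prop}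
    [IsStrictOrder β r] (htot : ∀ a ∈ s, ∀ b ∈ s, a ≠ b → r a b ∨ r b a) :
    ∃ l : List β, l.Nodup ∧ (∀ x, x ∈ l ↔ x ∈ s) ∧ l.Pairwise r := by
  classical
  have : Fintype s := hs.fintype
  have : IsStrictTotalOrder s fun a b => r a b :=
    { trichotomous := fun a b hab hba => by
        by_contra h
        exact (htot a a.2 b b.2 fun e => h (Subtype.ext e)).elim hab hba
      irrefl := fun a => irrefl (r := r) a.1
      trans := fun a b c => _root_.trans (r := r) }
  let := linearOrderOfSTO fun a b : s => r a b
  refine ⟨((Finset.univ : Finset s).sort).map Subtype.val, ?_, ?_, ?_⟩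
  · exact (Finset.sort_nodup _ _).map Subtype.val_injective
  · intro x
    simp
  · exact List.pairwise_map.2 (Finset.sortedLT_sort _).pairwise

end Enumerations

/-- The most reliable consistent sets of premisses are exactly the
limit sets of believed premisses, over all strict linear extensions `≺'`
of `≺`. -/
theorem mrc_eq_limit_believed {α : Type} (Sg : Set (Fml α)) (hfin : Sg.Finite)
    (prec : Fml α → Fml α → Prop) (hprec : IsReliability Sg prec) :
    {D | MRC Sg prec D} =
      {D | ∃ lt, IsLinearExt Sg prec lt ∧ D = Sg \ OutA (Ainf Sg lt) D} := by
  classical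
  ext D
  constructor
  · rintro ⟨l, hl, rfl⟩
    exact ⟨enumOrder l, hl.isLinearExt_enumOrder hprec.1,
      mrcBuild_eq_sdiff_outA hl.2.1 (pairwise_enumOrder hl.1)⟩
  · rintro ⟨lt, hlt, hD⟩
    have := hlt.isStrictOrder
    obtain ⟨l, hnd, hmem, hl⟩ := exists_nodup_pairwise hfin (r := fun a b => lt b a)
      fun a ha b hb hab => (hlt.2.2.2.1 a ha b hb hab).symm
    exact ⟨l, isEnum_of_pairwise hnd hmem hl hlt.2.2.2.2,
      eq_of_eq_sdiff_outA hfin hD (mrcBuild_eq_sdiff_outA hmem hl)⟩
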